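/- arXiv:2002.04782 — 7 statements merged into one kernel-verified Lean document; each statement's English description precedes it below -/
import Mathlib

section
/- Let A be a modal algebra in which 0 is the greatest lower bound of {◇ⁿ⊤ : n ∈ ω}. Then the map η_A : A → P(𝓕_Q(A)) given by η_A(x) = {F ∈ 𝓕_Q(A) : x ∈ F} is (i) injective, (ii) a homomorphism of Boolean algebras into the powerset Boolean algebra of 𝓕_Q(A), (iii) satisfies η_A(□x) = □_{Frm_Q(A)} η_A(x) for every x ∈ A, where □_{Frm_Q(A)} X = {F ∈ 𝓕_Q(A) : ∀G, (F,G) ∈ R_Q → G ∈ X}, and (iv) satisfies ⋂_{n∈ω} η_A(◇ⁿ⊤) = ∅. -/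
/-- A prime filter of a Boolean algebra: a proper filter `F` such that
`x ⊔ y ∈ F` implies `x ∈ F` or `y ∈ F`. -/
structure IsPrimeFilter {A : Type} [BooleanAlgebra A] (F : Set A) : Prop where
  top_mem : ⊤ ∈ F
  bot_not_mem : ⊥ ∉ F
  inf_mem : ∀ ⦃x⦄, x ∈ F → ∀ ⦃y⦄, y ∈ F → x ⊓ y ∈ F
  mem_of_le : ∀ ⦃x⦄, x ∈ F → ∀ ⦃y⦄, x ≤ y → y ∈ F
  prime : ∀ ⦃x y⦄, x ⊔ y ∈ F → x ∈ F ∨ y ∈ F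

/-- The diamond operation `◇x = ¬□¬x` of a modal algebra. -/
def diaA {A : Type} [BooleanAlgebra A] (box : A → A) (x : A) : A := (box xᶜ)ᶜ

/-- `dianA box n = ◇ⁿ⊤`. -/
def dianA {A : Type} [BooleanAlgebra A] (box : A → A) : ℕ → A
  | 0 => ⊤
  | n+1 => diaA box (dianA box n)

/-- `𝓕_Q(A)`: the prime filters `F` of `A` such that `◇ᵏ⊤ ∉ F` for some `k ∈ ω`. -/
def QFilt {A : Type} [BooleanAlgebra A] (box : A → A) : Type :=
  {F : Set A // IsPrimeFilter F ∧ ∃ k : ℕ, dianA box k ∉ F}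

/-- The relation `R_Q` on `𝓕_Q(A)`: `(F, G) ∈ R_Q` iff `□⁻¹F ⊆ G`. -/
def RQ {A : Type} [BooleanAlgebra A] (box : A → A) (F G : QFilt box) : Prop :=
  ∀ x : A, box x ∈ F.1 → x ∈ G.1

/-- The map `η_A(x) = {F ∈ 𝓕_Q(A) : x ∈ F}`. -/
def eta {A : Type} [BooleanAlgebra A] (box : A → A) (x : A) : Set (QFilt box) :=
  {F | x ∈ F.1}

/-- The box operator of the powerset modal algebra `Alg(F)` of a frame `F = (W, R)`. -/
def boxF {W : Type} (R : W → W → Prop) (X : Set W) : Set W :=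
  {w | ∀ w', R w w' → w' ∈ X}

/-- The diamond operator of `Alg(F)`: `◇_F X = R⁻¹[X]`. -/
def diaF {W : Type} (R : W → W → Prop) (X : Set W) : Set W :=
  {w | ∃ w', R w w' ∧ w' ∈ X}

/-!
Every element outside a filter is separated from it by a prime filter (the prime ideal theorem
for distributive lattices). If `a ≰ b` then `a \ b ≠ ⊥` is not a lower bound of the `◇ⁿ⊤`, so
`a ≰ b ⊔ ◇ⁿ⊤` for some `n`, and a prime filter separating `a` from `b ⊔ ◇ⁿ⊤` is a point of
`𝓕_Q(A)` in `η(a) \ η(b)`; hence `η` is injective. For `□`, a point `F` with `□x ∉ F` is related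
to a prime filter `G ⊇ □⁻¹F` avoiding `x`, and `G` lies in `𝓕_Q(A)` because `◇ᵐ⁺¹⊤ ∉ F` forces
`◇ᵐ⊤ ∉ G`.
-/

open Order

namespace IsPrimeFilter

variable {A : Type} [BooleanAlgebra A] {F : Set A}

theorem inf_mem_iff (hF : IsPrimeFilter F) {x y : A} : x ⊓ y ∈ F ↔ x ∈ F ∧ y ∈ F :=
  ⟨fun h => ⟨hF.mem_of_le h inf_le_left, hF.mem_of_le h inf_le_right⟩,
    fun h => hF.inf_mem h.1 h.2⟩

theorem sup_mem_iff (hF : IsPrimeFilter F) {x y : A} : x ⊔ y ∈ F ↔ x ∈ F ∨ y ∈ F :=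
  ⟨fun h => hF.prime h,
    fun h => h.elim (hF.mem_of_le · le_sup_left) (hF.mem_of_le · le_sup_right)⟩

theorem compl_mem_iff (hF : IsPrimeFilter F) (x : A) : xᶜ ∈ F ↔ x ∉ F := by
  refine ⟨fun hc hx => hF.bot_not_mem ?_, fun hx => ?_⟩
  · simpa using hF.inf_mem hx hc
  · have hF_sup : x ⊔ xᶜ ∈ F := by simpa using hF.top_mem
    exact (hF.prime hF_sup).resolve_left hx

theorem of_isPrime {J : Ideal A} (hJ : J.IsPrime) : IsPrimeFilter (J : Set A)ᶜ where
  top_mem := hJ.top_notMem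
  bot_not_mem := not_not.2 J.bot_mem
  inf_mem _ hx _ hy := fun hxy => (hJ.mem_or_mem hxy).elim hx hy
  mem_of_le _ hx _ hxy := fun hy => hx (J.lower hxy hy)
  prime x y hxy := by
    by_contra! h
    exact hxy (Ideal.sup_mem (not_not.1 h.1) (not_not.1 h.2))

theorem exists_superset_notMem {S : Set A} (hS : IsPFilter S) {x : A} (hx : x ∉ S) :
    ∃ G : Set A, IsPrimeFilter G ∧ S ⊆ G ∧ x ∉ G := by
  have hdisj : Disjoint (hS.toPFilter : Set A) (Ideal.principal x) :=
    Set.disjoint_left.2 fun y hy hyx => hx (hS.toPFilter.mem_of_le hyx hy)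
  obtain ⟨J, hJ, hxJ, hSJ⟩ := DistribLattice.prime_ideal_of_disjoint_filter_ideal hdisj
  exact ⟨(J : Set A)ᶜ, of_isPrime hJ, hSJ.subset_compl_right,
    not_not.2 (hxJ Ideal.mem_principal_self)⟩

theorem exists_mem_notMem {a b : A} (h : ¬a ≤ b) :
    ∃ G : Set A, IsPrimeFilter G ∧ a ∈ G ∧ b ∉ G := by
  obtain ⟨G, hG, haG, hbG⟩ :=
    exists_superset_notMem (PFilter.principal a).isPFilter (x := b) (by simpa using h)
  exact ⟨G, hG, haG (by simp), hbG⟩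

end IsPrimeFilter

section ModalAlgebra

variable {A : Type} [BooleanAlgebra A] {box : A → A}

theorem box_monotone (hbox_inf : ∀ x y : A, box (x ⊓ y) = box x ⊓ box y) : Monotone box :=
  fun x y hxy => by
    calc box x = box (x ⊓ y) := by rw [inf_eq_left.2 hxy]
      _ ≤ box y := (hbox_inf x y).trans_le inf_le_right

theorem isPFilter_preimage_box (hbox_top : box ⊤ = ⊤)
    (hbox_inf : ∀ x y : A, box (x ⊓ y) = box x ⊓ box y) {F : Set A} (hF : IsPrimeFilter F) :
    IsPFilter (box ⁻¹' F) :=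
  .of_def ⟨⊤, by simpa [hbox_top] using hF.top_mem⟩
    (fun x hx y hy => ⟨x ⊓ y, by simpa [hbox_inf] using hF.inf_mem hx hy,
      inf_le_left, inf_le_right⟩)
    (fun hxy hx => hF.mem_of_le hx (box_monotone hbox_inf hxy))

theorem exists_dianA_notMem_of_preimage_box_subset {F G : Set A} (hF : IsPrimeFilter F)
    (hG : IsPrimeFilter G) (hFG : box ⁻¹' F ⊆ G) (hk : ∃ k, dianA box k ∉ F) :
    ∃ m, dianA box m ∉ G := by
  obtain ⟨_ | m, hm⟩ := hk
  · exact absurd hF.top_mem hm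
  · have hbox : box (dianA box m)ᶜ ∈ F := by
      simpa [dianA, diaA] using (hF.compl_mem_iff _).2 hm
    exact ⟨m, (hG.compl_mem_iff _).1 (hFG hbox)⟩

theorem exists_not_le_sup_dianA (hglb : IsGLB (Set.range fun n : ℕ => dianA box n) (⊥ : A))
    {a b : A} (h : ¬a ≤ b) : ∃ n, ¬a ≤ b ⊔ dianA box n := by
  by_contra! hle
  have hbot : a \ b ≤ ⊥ := hglb.2 <| Set.forall_mem_range.2 fun n => sdiff_le_iff.2 (hle n)
  exact h (by simpa using sdiff_le_iff.1 hbot)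

theorem exists_qFilt_mem_notMem (hglb : IsGLB (Set.range fun n : ℕ => dianA box n) (⊥ : A))
    {a b : A} (h : ¬a ≤ b) : ∃ F : QFilt box, a ∈ F.1 ∧ b ∉ F.1 := by
  obtain ⟨n, hn⟩ := exists_not_le_sup_dianA hglb h
  obtain ⟨G, hG, haG, hG_sup⟩ := IsPrimeFilter.exists_mem_notMem hn
  rw [hG.sup_mem_iff, not_or] at hG_sup
  exact ⟨⟨G, hG, n, hG_sup.2⟩, haG, hG_sup.1⟩

theorem eta_subset_eta_iff (hglb : IsGLB (Set.range fun n : ℕ => dianA box n) (⊥ : A))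
    {a b : A} : eta box a ⊆ eta box b ↔ a ≤ b := by
  refine ⟨fun h => ?_, fun h F haF => F.2.1.mem_of_le haF h⟩
  by_contra hab
  obtain ⟨F, haF, hbF⟩ := exists_qFilt_mem_notMem hglb hab
  exact hbF (h haF)

theorem eta_injective (hglb : IsGLB (Set.range fun n : ℕ => dianA box n) (⊥ : A)) :
    Function.Injective (eta box) := fun _ _ h =>
  le_antisymm ((eta_subset_eta_iff hglb).1 h.le) ((eta_subset_eta_iff hglb).1 h.ge)

theorem eta_top : eta box (⊤ : A) = Set.univ :=
  Set.eq_univ_of_forall fun F => F.2.1.top_mem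

theorem eta_bot : eta box (⊥ : A) = ∅ :=
  Set.eq_empty_of_forall_notMem fun F => F.2.1.bot_not_mem

theorem eta_inf (x y : A) : eta box (x ⊓ y) = eta box x ∩ eta box y :=
  Set.ext fun F => F.2.1.inf_mem_iff

theorem eta_sup (x y : A) : eta box (x ⊔ y) = eta box x ∪ eta box y :=
  Set.ext fun F => F.2.1.sup_mem_iff

theorem eta_compl (x : A) : eta box xᶜ = (eta box x)ᶜ :=
  Set.ext fun F => F.2.1.compl_mem_iff x

theorem eta_box (hbox_top : box ⊤ = ⊤) (hbox_inf : ∀ x y : A, box (x ⊓ y) = box x ⊓ box y)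
    (x : A) : eta box (box x) = boxF (RQ box) (eta box x) := by
  ext F
  refine ⟨fun hF G hFG => hFG x hF, fun hF => ?_⟩
  by_contra hxF
  obtain ⟨G, hG, hFG, hxG⟩ := IsPrimeFilter.exists_superset_notMem
    (isPFilter_preimage_box hbox_top hbox_inf F.2.1) (x := x) hxF
  have hQ := exists_dianA_notMem_of_preimage_box_subset F.2.1 hG hFG F.2.2
  exact hxG (hF ⟨G, hG, hQ⟩ hFG)

theorem iInter_eta_dianA : ⋂ n : ℕ, eta box (dianA box n) = ∅ :=
  Set.eq_empty_of_forall_notMem fun F hF =>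
    let ⟨k, hk⟩ := F.2.2
    hk (Set.mem_iInter.1 hF k)

end ModalAlgebra

theorem stmt1 {A : Type} [BooleanAlgebra A] (box : A → A)
    (hbox_top : box ⊤ = ⊤) (hbox_inf : ∀ x y : A, box (x ⊓ y) = box x ⊓ box y)
    (hglb : IsGLB (Set.range fun n : ℕ => dianA box n) (⊥ : A)) :
    Function.Injective (eta box) ∧
    (eta box (⊤ : A) = Set.univ ∧ eta box (⊥ : A) = ∅ ∧
      (∀ x y : A, eta box (x ⊓ y) = eta box x ∩ eta box y) ∧
      (∀ x y : A, eta box (x ⊔ y) = eta box x ∪ eta box y) ∧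
      (∀ x : A, eta box xᶜ = (eta box x)ᶜ)) ∧
    (∀ x : A, eta box (box x) = boxF (RQ box) (eta box x)) ∧
    (⋂ n : ℕ, eta box (dianA box n)) = (∅ : Set (QFilt box)) :=
  ⟨eta_injective hglb, ⟨eta_top, eta_bot, eta_inf, eta_sup, eta_compl⟩,
    eta_box hbox_top hbox_inf, iInter_eta_dianA⟩
end

section
/- Let A be a modal algebra in which 0 is the greatest lower bound of {◇ⁿ⊤ : n ∈ ω}. Then for every k ∈ ω, the element □ᵏ0 is the greatest lower bound of the set {□ᵏ◇ⁿ⊤ : n ∈ ω}, where □ᵏ denotes k-fold application of □. -/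
theorem monotone_of_map_inf {α β : Type*} [SemilatticeInf α] [SemilatticeInf β] {f : α → β}
    (hf : ∀ x y, f (x ⊓ y) = f x ⊓ f y) : Monotone f :=
  OrderHomClass.mono (InfHom.mk f hf)

section Modal

variable {A : Type} [BooleanAlgebra A] {box : A → A}

theorem diaA_monotone (hbox : Monotone box) : Monotone (diaA box) :=
  fun _ _ h => compl_le_compl (hbox (compl_le_compl h))

theorem box_inf_diaA_le (hbox_inf : ∀ x y : A, box (x ⊓ y) = box x ⊓ box y) (a b : A) :
    box a ⊓ diaA box b ≤ diaA box (a ⊓ b) := by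
  have hbox_le : box a ⊓ box (a ⊓ b)ᶜ ≤ box bᶜ := by
    rw [← hbox_inf]
    exact monotone_of_map_inf hbox_inf (by simp [compl_inf, inf_sup_left])
  rw [diaA, diaA, le_compl_iff_disjoint_right, disjoint_iff_inf_le]
  calc box a ⊓ (box bᶜ)ᶜ ⊓ box (a ⊓ b)ᶜ = box a ⊓ box (a ⊓ b)ᶜ ⊓ (box bᶜ)ᶜ := by ac_rfl
    _ ≤ box bᶜ ⊓ (box bᶜ)ᶜ := inf_le_inf_right _ hbox_le
    _ = ⊥ := inf_compl_eq_bot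

theorem iterate_box_inf_iterate_diaA_le (hbox_inf : ∀ x y : A, box (x ⊓ y) = box x ⊓ box y)
    (k : ℕ) (a b : A) : box^[k] a ⊓ (diaA box)^[k] b ≤ (diaA box)^[k] (a ⊓ b) := by
  induction k with
  | zero => rfl
  | succ k ih =>
    simp only [Function.iterate_succ_apply']
    exact (box_inf_diaA_le hbox_inf _ _).trans
      (diaA_monotone (monotone_of_map_inf hbox_inf) ih)

theorem iterate_diaA_dianA (k m : ℕ) : (diaA box)^[k] (dianA box m) = dianA box (m + k) := by
  induction k with
  | zero => rfl
  | succ k ih => rw [Function.iterate_succ_apply', ih]; rfl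

theorem dianA_eq_compl_iterate_box_bot (k : ℕ) : dianA box k = (box^[k] ⊥)ᶜ := by
  induction k with
  | zero => simp [dianA]
  | succ k ih => rw [dianA, diaA, ih, compl_compl, Function.iterate_succ_apply']

theorem dianA_antitone (hbox : Monotone box) : Antitone (dianA box) := by
  refine antitone_nat_of_succ_le fun n => ?_
  induction n with
  | zero => exact le_top
  | succ n ih => exact diaA_monotone hbox ih

end Modal

theorem stmt3_general {A : Type} [BooleanAlgebra A] (box : A → A)
    (hbox_inf : ∀ x y : A, box (x ⊓ y) = box x ⊓ box y)
    (hglb : IsGLB (Set.range fun n : ℕ => dianA box n) (⊥ : A))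
    (k : ℕ) :
    IsGLB (Set.range fun n : ℕ => box^[k] (dianA box n)) (box^[k] (⊥ : A)) := by
  have hbox := monotone_of_map_inf hbox_inf
  refine ⟨Set.forall_mem_range.2 fun n => hbox.iterate k bot_le, fun b hb => ?_⟩
  have hlower : ∀ m, b ⊓ dianA box k ≤ dianA box m := fun m => calc
    b ⊓ dianA box k ≤ box^[k] (dianA box m) ⊓ (diaA box)^[k] (dianA box 0) := by
      rw [iterate_diaA_dianA, zero_add]
      exact inf_le_inf_right _ (hb ⟨m, rfl⟩)
    _ ≤ (diaA box)^[k] (dianA box m) := by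
      simpa [dianA] using iterate_box_inf_iterate_diaA_le hbox_inf k (dianA box m) ⊤
    _ = dianA box (m + k) := iterate_diaA_dianA k m
    _ ≤ dianA box m := dianA_antitone hbox (m.le_add_right k)
  have hdisj : b ⊓ dianA box k ≤ ⊥ := hglb.2 (Set.forall_mem_range.2 hlower)
  rwa [← disjoint_iff_inf_le, dianA_eq_compl_iterate_box_bot, disjoint_compl_right_iff] at hdisj

theorem stmt3 {A : Type} [BooleanAlgebra A] (box : A → A)
    (hbox_top : box ⊤ = ⊤) (hbox_inf : ∀ x y : A, box (x ⊓ y) = box x ⊓ box y)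
    (hglb : IsGLB (Set.range fun n : ℕ => dianA box n) (⊥ : A))
    (k : ℕ) :
    IsGLB (Set.range fun n : ℕ => box^[k] (dianA box n)) (box^[k] (⊥ : A)) :=
  stmt3_general box hbox_inf hglb k
end

section
/- (Soundness of NGL.) For every modal formula φ, if φ is derivable in NGL, then every transitive Kripke frame of locally finite height validates φ. -/
/-- Modal formulas over a countable set of propositional variables. -/
inductive Fml : Type where
  | prop : ℕ → Fml
  | top : Fml
  | and : Fml → Fml → Fml
  | neg : Fml → Fml
  | box : Fml → Fml

namespace Fml
/-- `⊥` abbreviates `¬⊤`. -/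
def bot : Fml := neg top
/-- `φ ∨ ψ` abbreviates `¬(¬φ ∧ ¬ψ)`. -/
def or (φ ψ : Fml) : Fml := neg (and (neg φ) (neg ψ))
/-- `φ ⊃ ψ` abbreviates `¬(φ ∧ ¬ψ)`. -/
def imp (φ ψ : Fml) : Fml := neg (and φ (neg ψ))
/-- `◇φ` abbreviates `¬□¬φ`. -/
def dia (φ : Fml) : Fml := neg (box (neg φ))
/-- `◇ⁿφ`: n-fold application of `◇`. -/
def dian : ℕ → Fml → Fml
  | 0, φ => φ
  | n+1, φ => dia (dian n φ)
end Fml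

/-- Truth of a modal formula at a world of a Kripke model `(W, R, v)`. -/
def Truth {W : Type} (R : W → W → Prop) (v : ℕ → Set W) : Fml → W → Prop
  | .prop n, w => w ∈ v n
  | .top, _ => True
  | .and φ ψ, w => Truth R v φ w ∧ Truth R v ψ w
  | .neg φ, w => ¬ Truth R v φ w
  | .box φ, w => ∀ w', R w w' → Truth R v φ w'

/-- A frame validates `φ` if `φ` is true at every world under every valuation. -/
def Valid {W : Type} (R : W → W → Prop) (φ : Fml) : Prop :=
  ∀ (v : ℕ → Set W) (w : W), Truth R v φ w

/-- A frame is of locally finite height if for every world `w`, the supremum of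
lengths of `R`-chains starting at `w` is finite. -/
def LocallyFiniteHeight {W : Type} (R : W → W → Prop) : Prop :=
  ∀ w : W, ∃ N : ℕ, ∀ (n : ℕ) (c : ℕ → W),
    c 0 = w → (∀ i < n, R (c i) (c (i+1))) → n ≤ N

/-- Boolean evaluation treating propositional variables and boxed formulas as atoms. -/
def beval (f : Fml → Bool) : Fml → Bool
  | .prop n => f (.prop n)
  | .top => true
  | .and φ ψ => beval f φ && beval f ψ
  | .neg φ => !(beval f φ)
  | .box φ => f (.box φ)

/-- Classical propositional tautologies (in the modal language). -/
def Taut (φ : Fml) : Prop := ∀ f : Fml → Bool, beval f φ = true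

/-- Uniform substitution. -/
def fsubst (σ : ℕ → Fml) : Fml → Fml
  | .prop n => σ n
  | .top => .top
  | .and φ ψ => .and (fsubst σ φ) (fsubst σ ψ)
  | .neg φ => .neg (fsubst σ φ)
  | .box φ => .box (fsubst σ φ)

/-- The axiom K : `□(p ⊃ q) ⊃ (□p ⊃ □q)`. -/
def axK : Fml :=
  Fml.imp (Fml.box (Fml.imp (Fml.prop 0) (Fml.prop 1)))
    (Fml.imp (Fml.box (Fml.prop 0)) (Fml.box (Fml.prop 1)))

/-- The axiom 4 : `□p ⊃ □□p`. -/
def axFour : Fml :=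
  Fml.imp (Fml.box (Fml.prop 0)) (Fml.box (Fml.box (Fml.prop 0)))

/-- The Löb formula : `□(□p ⊃ p) ⊃ □p`. -/
def axLob : Fml :=
  Fml.imp (Fml.box (Fml.imp (Fml.box (Fml.prop 0)) (Fml.prop 0)))
    (Fml.box (Fml.prop 0))

/-- The proof system `NGL`: classical tautologies, K, 4, modus ponens, uniform
substitution, generalization, and the non-compactness rule. -/
inductive NGL : Fml → Prop where
  | taut {φ} : Taut φ → NGL φ
  | axK : NGL axK
  | ax4 : NGL axFour
  | mp {φ ψ} : NGL (Fml.imp φ ψ) → NGL φ → NGL ψ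
  | usub {φ} (σ : ℕ → Fml) : NGL φ → NGL (fsubst σ φ)
  | nec {φ} : NGL φ → NGL (Fml.box φ)
  | nc {φ} : (∀ n : ℕ, NGL (Fml.imp φ (Fml.dian n Fml.top))) → NGL (Fml.imp φ Fml.bot)

/-!
Every axiom is valid on transitive frames (4 is exactly where transitivity enters) and the
classical rules preserve validity on a fixed frame. The non-compactness rule is sound on frames of
locally finite height: if every chain from `w` has length at most `N`, then `◇^(N+1)⊤` fails at `w`,
so the premise `φ ⊃ ◇^(N+1)⊤` forces `φ` to fail at `w`.
-/

section Semantics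

variable {W : Type} {R : W → W → Prop} {v : ℕ → Set W}

@[simp]
lemma truth_imp {φ ψ : Fml} {w : W} :
    Truth R v (φ.imp ψ) w ↔ (Truth R v φ w → Truth R v ψ w) := by
  simp [Fml.imp, Truth]

@[simp]
lemma truth_dia {φ : Fml} {w : W} :
    Truth R v φ.dia w ↔ ∃ w', R w w' ∧ Truth R v φ w' := by
  simp [Fml.dia, Truth]

lemma truth_dian_top_iff_exists_chain (n : ℕ) (w : W) :
    Truth R v (Fml.dian n .top) w ↔ ∃ c : ℕ → W, c 0 = w ∧ ∀ i < n, R (c i) (c (i + 1)) := by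
  induction n generalizing w with
  | zero => exact ⟨fun _ => ⟨fun _ => w, rfl, by simp⟩, fun _ => trivial⟩
  | succ n ih =>
    simp only [Fml.dian, truth_dia, ih]
    constructor
    · rintro ⟨w', hww', c, rfl, hc⟩
      refine ⟨fun | 0 => w | i + 1 => c i, rfl, ?_⟩
      rintro (_ | i) hi
      exacts [hww', hc i (by omega)]
    · rintro ⟨c, rfl, hc⟩
      exact ⟨c 1, hc 0 (by omega), fun i => c (i + 1), rfl, fun i hi => hc (i + 1) (by omega)⟩

open Classical in
lemma beval_truth_iff (w : W) (φ : Fml) :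
    beval (fun ψ => decide (Truth R v ψ w)) φ = true ↔ Truth R v φ w := by
  induction φ with
  | prop n | box φ _ => simp [beval]
  | top => simp [beval, Truth]
  | and φ ψ ih₁ ih₂ => simp [beval, Truth, ih₁, ih₂]
  | neg φ ih => simp [beval, Truth, ← ih]

lemma truth_fsubst (σ : ℕ → Fml) (φ : Fml) (w : W) :
    Truth R v (fsubst σ φ) w ↔ Truth R (fun n => {x | Truth R v (σ n) x}) φ w := by
  induction φ generalizing w with
  | prop n => rfl
  | top => simp [fsubst, Truth]
  | and φ ψ ih₁ ih₂ => simp [fsubst, Truth, ih₁, ih₂]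
  | neg φ ih => simp [fsubst, Truth, ih]
  | box φ ih => simp [fsubst, Truth, ih]

end Semantics

section Validity

variable {W : Type} {R : W → W → Prop} {φ ψ : Fml}

lemma valid_of_taut (h : Taut φ) : Valid R φ :=
  fun _ w => (beval_truth_iff w φ).1 (h _)

lemma valid_axK : Valid R axK := by
  intro _ w
  simp only [axK, truth_imp, Truth]
  exact fun hpq hp w' hww' => hpq w' hww' (hp w' hww')

lemma valid_axFour (hR : Transitive R) : Valid R axFour := by
  intro _ w
  simp only [axFour, truth_imp, Truth]
  exact fun hp w' hww' w'' hw'w'' => hp w'' (hR hww' hw'w'')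

lemma Valid.mp (hφψ : Valid R (φ.imp ψ)) (hφ : Valid R φ) : Valid R ψ :=
  fun v w => truth_imp.1 (hφψ v w) (hφ v w)

lemma Valid.fsubst (σ : ℕ → Fml) (h : Valid R φ) : Valid R (fsubst σ φ) :=
  fun _ w => (truth_fsubst σ φ w).2 (h _ w)

lemma Valid.box (h : Valid R φ) : Valid R φ.box :=
  fun v _ w' _ => h v w'

lemma LocallyFiniteHeight.exists_not_truth_dian_top (hR : LocallyFiniteHeight R)
    (v : ℕ → Set W) (w : W) : ∃ n, ¬ Truth R v (Fml.dian n .top) w := by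
  obtain ⟨N, hN⟩ := hR w
  refine ⟨N + 1, fun h => ?_⟩
  obtain ⟨c, hc₀, hc⟩ := (truth_dian_top_iff_exists_chain (N + 1) w).1 h
  exact absurd (hN (N + 1) c hc₀ hc) (by omega)

lemma LocallyFiniteHeight.valid_imp_bot (hR : LocallyFiniteHeight R)
    (h : ∀ n, Valid R (φ.imp (Fml.dian n .top))) : Valid R (φ.imp .bot) := by
  intro v w
  rw [truth_imp]
  intro hφ
  obtain ⟨n, hn⟩ := hR.exists_not_truth_dian_top v w
  exact absurd (truth_imp.1 (h n v w) hφ) hn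

end Validity

theorem stmt4 (φ : Fml) (h : NGL φ) :
    ∀ (W : Type) [Nonempty W] (R : W → W → Prop),
      Transitive R → LocallyFiniteHeight R → Valid R φ := by
  intro W _ R hT hL
  induction h with
  | taut ht => exact valid_of_taut ht
  | axK => exact valid_axK
  | ax4 => exact valid_axFour hT
  | mp _ _ ihφψ ihφ => exact ihφψ.mp ihφ
  | usub σ _ ih => exact ih.fsubst σ
  | nec _ ih => exact ih.box
  | nc _ ih => exact hL.valid_imp_bot ih
end

section
/- NGL is a proof system for the logic of provability: for every modal formula φ, φ ∈ GL if and only if φ is derivable in NGL. -/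
/-- The logic `GL`: the smallest normal modal logic containing the Löb formula. -/
inductive GLProv : Fml → Prop where
  | taut {φ} : Taut φ → GLProv φ
  | axK : GLProv axK
  | axLob : GLProv axLob
  | mp {φ ψ} : GLProv (Fml.imp φ ψ) → GLProv φ → GLProv ψ
  | usub {φ} (σ : ℕ → Fml) : GLProv φ → GLProv (fsubst σ φ)
  | nec {φ} : GLProv φ → GLProv (Fml.box φ)


/-!
`NGL` proves the Löb formula: by axiom 4, `L := □(□p ⊃ p) ∧ ¬□p` implies `◇L`, hence every
`◇ⁿ⊤`, so the non-compactness rule refutes `L`.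

Conversely, `GL` proves 4 and is closed under the non-compactness rule. If `φ` were
`GL`-consistent, it would hold at a world of the finite canonical model built on the
subformulas `B` of `φ`. That model is transitive and conversely well-founded, so `GL` is sound
for it, and along its accessibility relation the number of true boxed formulas of `B` strictly
increases. Hence no world satisfies `◇^(|B|+1)⊤`, contradicting `GL ⊢ φ ⊃ ◇^(|B|+1)⊤`.
-/

deriving instance DecidableEq for Fml

-- `K` is postulated for all instances, so that no substitution rule is needed.
structure NormalSystem (S : Fml → Prop) : Prop where
  taut : ∀ {φ}, Taut φ → S φ
  K : ∀ a b : Fml, S ((a.imp b).box.imp (a.box.imp b.box))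
  mp : ∀ {φ ψ}, S (φ.imp ψ) → S φ → S ψ
  nec : ∀ {φ}, S φ → S φ.box

theorem GLProv.normalSystem : NormalSystem GLProv where
  taut := GLProv.taut
  K a b := GLProv.usub (fun n => if n = 0 then a else b) GLProv.axK
  mp := GLProv.mp
  nec := GLProv.nec

theorem NGL.normalSystem : NormalSystem NGL where
  taut := NGL.taut
  K a b := NGL.usub (fun n => if n = 0 then a else b) NGL.axK
  mp := NGL.mp
  nec := NGL.nec

def Fml.conj : List Fml → Fml
  | [] => top
  | ψ :: l => ψ.and (conj l)

theorem beval_conj (f : Fml → Bool) (l : List Fml) :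
    beval f (Fml.conj l) = true ↔ ∀ ψ ∈ l, beval f ψ = true := by
  induction l with
  | nil => simp [Fml.conj, beval]
  | cons a l ih => simp [Fml.conj, beval, ih]

namespace NormalSystem

variable {S : Fml → Prop} {a b c : Fml}

theorem mp_taut (hS : NormalSystem S) (ht : Taut (a.imp b)) (ha : S a) : S b :=
  hS.mp (hS.taut ht) ha

theorem mp_taut₂ (hS : NormalSystem S) (ht : Taut (a.imp (b.imp c))) (ha : S a) (hb : S b) :
    S c :=
  hS.mp (hS.mp_taut ht ha) hb

theorem imp_trans (hS : NormalSystem S) (hab : S (a.imp b)) (hbc : S (b.imp c)) :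
    S (a.imp c) :=
  hS.mp_taut₂ (fun f => by simp only [Fml.imp, beval]; grind) hab hbc

theorem imp_and (hS : NormalSystem S) (hab : S (a.imp b)) (hac : S (a.imp c)) :
    S (a.imp (b.and c)) :=
  hS.mp_taut₂ (fun f => by simp only [Fml.imp, beval]; grind) hab hac

theorem and_imp_left (hS : NormalSystem S) : S ((a.and b).imp a) :=
  hS.taut fun f => by simp only [Fml.imp, beval]; grind

theorem and_imp_right (hS : NormalSystem S) : S ((a.and b).imp b) :=
  hS.taut fun f => by simp only [Fml.imp, beval]; grind

theorem box_mono (hS : NormalSystem S) (h : S (a.imp b)) : S (a.box.imp b.box) :=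
  hS.mp (hS.K a b) (hS.nec h)

theorem dia_mono (hS : NormalSystem S) (h : S (a.imp b)) : S (a.dia.imp b.dia) := by
  have hneg : S (b.neg.imp a.neg) := hS.mp_taut (fun f => by simp only [Fml.imp, beval]; grind) h
  exact hS.mp_taut (fun f => by simp only [Fml.imp, Fml.dia, beval]; grind) (hS.box_mono hneg)

theorem box_and (hS : NormalSystem S) : S ((a.box.and b.box).imp (a.and b).box) := by
  have h : S (a.box.imp (b.imp (a.and b)).box) :=
    hS.box_mono (hS.taut fun f => by simp only [Fml.imp, beval]; grind)
  exact hS.mp_taut (fun f => by simp only [Fml.imp, beval]; grind)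
    (hS.imp_trans h (hS.K b (a.and b)))

theorem box_and_dia (hS : NormalSystem S) : S ((a.box.and b.dia).imp (a.and b).dia) := by
  have h : S (a.box.imp ((a.and b).neg.imp b.neg).box) :=
    hS.box_mono (hS.taut fun f => by simp only [Fml.imp, beval]; grind)
  exact hS.mp_taut (fun f => by simp only [Fml.imp, Fml.dia, beval]; grind)
    (hS.imp_trans h (hS.K (a.and b).neg b.neg))

theorem imp_dian_top_of_imp_dia (hS : NormalSystem S) (h : S (a.imp a.dia)) (n : ℕ) :
    S (a.imp (Fml.dian n Fml.top)) := by
  induction n with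
  | zero => exact hS.taut fun f => by simp only [Fml.imp, Fml.dian, beval]; grind
  | succ n ih => exact hS.imp_trans h (hS.dia_mono ih)

theorem conj_elem (hS : NormalSystem S) {l : List Fml} (h : a ∈ l) : S ((Fml.conj l).imp a) :=
  hS.taut fun f => by
    have := (beval_conj f l).mp
    simp only [Fml.imp, beval]
    grind

theorem imp_conj (hS : NormalSystem S) {l : List Fml} (h : ∀ b ∈ l, S (a.imp b)) :
    S (a.imp (Fml.conj l)) := by
  induction l with
  | nil => exact hS.taut fun f => by simp only [Fml.imp, Fml.conj, beval]; grind
  | cons b l ih => exact hS.imp_and (h b (by simp)) (ih fun c hc => h c (by simp [hc]))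

theorem conj_box (hS : NormalSystem S) (l : List Fml) :
    S ((Fml.conj (l.map Fml.box)).imp (Fml.conj l).box) := by
  induction l with
  | nil =>
    show S (Fml.top.imp Fml.top.box)
    exact hS.mp_taut (a := Fml.top.box) (fun f => by simp only [Fml.imp, beval]; grind)
      (hS.nec (hS.taut fun f => rfl))
  | cons b l ih =>
    exact hS.imp_trans (hS.imp_and hS.and_imp_left (hS.imp_trans hS.and_imp_right ih)) hS.box_and

end NormalSystem

theorem NGL.imp_bot_of_imp_dia_self {a : Fml} (h : NGL (a.imp a.dia)) : NGL (a.imp Fml.bot) :=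
  NGL.nc (NGL.normalSystem.imp_dian_top_of_imp_dia h)

theorem NGL.lob (p : Fml) : NGL ((p.box.imp p).box.imp p.box) := by
  have hS := NGL.normalSystem
  set A := (p.box.imp p).box
  set L := A.and p.box.neg
  have hA : NGL (A.imp A.box) := NGL.usub (fun _ => p.box.imp p) NGL.ax4
  have hbox : NGL (L.imp (A.and (p.box.imp p)).box) :=
    hS.imp_trans (hS.imp_and (hS.imp_trans hS.and_imp_left hA) hS.and_imp_left) hS.box_and
  have hdne : NGL (p.neg.neg.box.imp p.box) :=
    hS.box_mono (hS.taut fun f => by simp only [Fml.imp, beval]; grind)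
  have hdia : NGL (L.imp p.neg.dia) := hS.imp_trans hS.and_imp_right
    (hS.mp_taut (fun f => by simp only [Fml.imp, Fml.dia, beval]; grind) hdne)
  have hL : NGL (L.imp L.dia) :=
    hS.imp_trans (hS.imp_and hbox hdia) (hS.imp_trans hS.box_and_dia
      (hS.dia_mono (hS.taut fun f => by simp only [L, Fml.imp, beval]; grind)))
  exact hS.mp_taut (fun f => by simp only [L, Fml.imp, Fml.bot, beval]; grind)
    (NGL.imp_bot_of_imp_dia_self hL)

theorem GLProv.lob (a : Fml) : GLProv ((a.box.imp a).box.imp a.box) :=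
  GLProv.usub (fun _ => a) GLProv.axLob

theorem GLProv.four (a : Fml) : GLProv (a.box.imp a.box.box) := by
  have hS := GLProv.normalSystem
  set A := a.and a.box
  have hA : GLProv (A.box.imp a.box) := hS.box_mono hS.and_imp_left
  have h : GLProv (a.imp (A.box.imp A)) :=
    hS.mp_taut (fun f => by simp only [A, Fml.imp, beval]; grind) hA
  exact hS.imp_trans (hS.imp_trans (hS.box_mono h) (GLProv.lob A)) (hS.box_mono hS.and_imp_right)

structure KripkeModel where
  W : Type
  R : W → W → Prop
  V : ℕ → W → Prop

namespace KripkeModel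

def Forces (M : KripkeModel) : M.W → Fml → Prop
  | w, .prop n => M.V n w
  | _, .top => True
  | w, .and a b => M.Forces w a ∧ M.Forces w b
  | w, .neg a => ¬ M.Forces w a
  | w, .box a => ∀ v, M.R w v → M.Forces v a

variable {M : KripkeModel} {w : M.W} {a b : Fml}

theorem forces_imp : M.Forces w (a.imp b) ↔ (M.Forces w a → M.Forces w b) := by
  simp only [Fml.imp, Forces]
  tauto

theorem forces_dia : M.Forces w a.dia ↔ ∃ v, M.R w v ∧ M.Forces v a := by
  simp [Fml.dia, Forces]

theorem forces_of_taut (h : Taut a) : M.Forces w a := by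
  classical
  suffices ∀ ψ, beval (fun χ => decide (M.Forces w χ)) ψ = true ↔ M.Forces w ψ from
    (this a).mp (h _)
  intro ψ
  induction ψ with
  | and a b iha ihb => simp [beval, Forces, iha, ihb]
  | neg a iha => simp [beval, Forces, ← iha]
  | top => simp [beval, Forces]
  | prop | box => exact decide_eq_true_iff

def substVal (M : KripkeModel) (σ : ℕ → Fml) : KripkeModel :=
  ⟨M.W, M.R, fun n w => M.Forces w (σ n)⟩

theorem forces_fsubst (σ : ℕ → Fml) (a : Fml) (w : M.W) :
    M.Forces w (fsubst σ a) ↔ (M.substVal σ).Forces w a := by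
  induction a generalizing w with
  | box a ih => exact forall_congr' fun v => imp_congr Iff.rfl (ih v)
  | _ => simp_all [fsubst, Forces, substVal]

theorem add_le_of_forces_dian_top (μ : M.W → ℕ) {N : ℕ} (hμ : ∀ {w v}, M.R w v → μ w < μ v)
    (hN : ∀ w, μ w ≤ N) (n : ℕ) (w : M.W) (h : M.Forces w (Fml.dian n Fml.top)) : n + μ w ≤ N := by
  induction n generalizing w with
  | zero => simpa using hN w
  | succ n ih =>
    obtain ⟨v, hwv, hv⟩ := forces_dia.mp h
    have := ih v hv
    have := hμ hwv
    omega

end KripkeModel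

theorem wellFounded_flip_of_rank {α : Type*} {r : α → α → Prop} (μ : α → ℕ) (N : ℕ)
    (hμ : ∀ {a b}, r a b → μ a < μ b) (hN : ∀ a, μ a ≤ N) : WellFounded (flip r) :=
  Subrelation.wf (fun {a b} (h : r b a) => show N - μ a < N - μ b by
    have := hμ h
    have := hN a
    omega) (measure fun a => N - μ a).wf

theorem GLProv.forces {φ : Fml} (h : GLProv φ) (M : KripkeModel)
    (htrans : ∀ {u v w}, M.R u v → M.R v w → M.R u w) (hwf : WellFounded (flip M.R)) (w : M.W) :
    M.Forces w φ := by
  induction h generalizing M w with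
  | taut h => exact KripkeModel.forces_of_taut h
  | axK =>
    simp only [_root_.axK, KripkeModel.forces_imp]
    exact fun h₁ h₂ v hv => KripkeModel.forces_imp.mp (h₁ v hv) (h₂ v hv)
  | axLob =>
    simp only [_root_.axLob, KripkeModel.forces_imp]
    intro hlob v hwv
    induction v using hwf.induction with
    | _ v ih => exact KripkeModel.forces_imp.mp (hlob v hwv) fun u hvu => ih u hvu (htrans hwv hvu)
  | mp _ _ ih₁ ih₂ => exact KripkeModel.forces_imp.mp (ih₁ M htrans hwf w) (ih₂ M htrans hwf w)
  | usub σ _ ih => exact (KripkeModel.forces_fsubst σ _ w).mpr (ih (M.substVal σ) htrans hwf w)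
  | nec _ ih => exact fun v _ => ih M htrans hwf v

def Fml.subformulas : Fml → Finset Fml
  | prop n => {prop n}
  | top => {top}
  | and a b => insert (and a b) (a.subformulas ∪ b.subformulas)
  | neg a => insert (neg a) a.subformulas
  | box a => insert (box a) a.subformulas

theorem Fml.mem_subformulas_self (φ : Fml) : φ ∈ φ.subformulas := by
  cases φ <;> simp [subformulas]

theorem Fml.subformulas_subset {φ ψ : Fml} (h : ψ ∈ φ.subformulas) :
    ψ.subformulas ⊆ φ.subformulas := by
  induction φ with
  | prop | top => simp_all [subformulas]
  | and a b iha ihb =>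
    simp only [subformulas, Finset.mem_insert, Finset.mem_union] at h
    rcases h with rfl | h | h
    · rfl
    · exact (iha h).trans (Finset.subset_union_left.trans (Finset.subset_insert _ _))
    · exact (ihb h).trans (Finset.subset_union_right.trans (Finset.subset_insert _ _))
  | neg a ih | box a ih =>
    simp only [subformulas, Finset.mem_insert] at h
    rcases h with rfl | h
    · rfl
    · exact (ih h).trans (Finset.subset_insert _ _)

structure SubformulaClosed (B : Finset Fml) : Prop where
  and_mem : ∀ {a b : Fml}, a.and b ∈ B → a ∈ B ∧ b ∈ B
  neg_mem : ∀ {a : Fml}, a.neg ∈ B → a ∈ B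
  box_mem : ∀ {a : Fml}, a.box ∈ B → a ∈ B

theorem Fml.subformulaClosed_subformulas (φ : Fml) : SubformulaClosed φ.subformulas where
  and_mem h := ⟨subformulas_subset h (by simp [subformulas, mem_subformulas_self]),
    subformulas_subset h (by simp [subformulas, mem_subformulas_self])⟩
  neg_mem h := subformulas_subset h (by simp [subformulas, mem_subformulas_self])
  box_mem h := subformulas_subset h (by simp [subformulas, mem_subformulas_self])

def Fml.lit : Fml × Bool → Fml
  | (χ, true) => χ
  | (χ, false) => χ.neg

def Fml.litConj (c : List (Fml × Bool)) : Fml :=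
  Fml.conj (c.map Fml.lit)

theorem beval_litConj (f : Fml → Bool) (c : List (Fml × Bool)) :
    beval f (Fml.litConj c) = true ↔ ∀ p ∈ c, beval f p.1 = p.2 := by
  induction c with
  | nil => simp [Fml.litConj, Fml.conj, beval]
  | cons p c ih =>
    rcases p with ⟨χ, _ | _⟩ <;> simp_all [Fml.litConj, Fml.conj, Fml.lit, beval]

theorem taut_imp_of {a b : Fml} (h : ∀ f, beval f a = true → beval f b = true) :
    Taut (a.imp b) := fun f => by
  have := h f
  simp only [Fml.imp, beval]
  grind

def GLConsistent (a : Fml) : Prop := ¬ GLProv (a.imp Fml.bot)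

namespace GLConsistent

variable {a b : Fml} {c : List (Fml × Bool)}

theorem of_taut_imp (h : GLConsistent a) (ht : Taut (a.imp b)) : GLConsistent b :=
  fun hb => h (GLProv.normalSystem.imp_trans (GLProv.taut ht) hb)

theorem exists_beval (h : GLConsistent (Fml.litConj c)) :
    ∃ f, ∀ p ∈ c, beval f p.1 = p.2 := by
  by_contra! hc
  refine h (GLProv.taut fun f => ?_)
  obtain ⟨p, hp, hne⟩ := hc f
  have := (beval_litConj f c).not.mpr fun h => hne (h p hp)
  simp only [Fml.imp, Fml.bot, beval]
  grind

theorem exists_cons (h : GLConsistent (Fml.litConj c)) (χ : Fml) :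
    ∃ b, GLConsistent (Fml.litConj ((χ, b) :: c)) := by
  by_contra! hc
  simp only [GLConsistent, not_not] at hc
  refine h (GLProv.normalSystem.mp_taut₂ (fun f => ?_) (hc true) (hc false))
  simp only [Fml.litConj, List.map_cons, Fml.conj, Fml.lit, Fml.imp, Fml.bot, beval]
  grind

theorem exists_append (h : GLConsistent (Fml.litConj c)) (L : List Fml) :
    ∃ d, GLConsistent (Fml.litConj (d ++ c)) ∧ ∀ χ ∈ L, ∃ b, (χ, b) ∈ d := by
  induction L generalizing c with
  | nil => exact ⟨[], h, by simp⟩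
  | cons χ L ih =>
    obtain ⟨b, hb⟩ := h.exists_cons χ
    obtain ⟨d, hd, hdL⟩ := ih hb
    refine ⟨d ++ [(χ, b)], by simpa using hd, ?_⟩
    simp only [List.mem_cons, forall_eq_or_imp, List.mem_append]
    exact ⟨⟨b, by simp⟩, fun ψ hψ => (hdL ψ hψ).imp fun _ => Or.inl⟩

end GLConsistent

noncomputable def charFml (B : Finset Fml) (t : Fml → Bool) : Fml :=
  Fml.litConj (B.toList.map fun χ => (χ, t χ))

-- Only the values of a world on `B` matter.
def IsWorld (B : Finset Fml) (t : Fml → Bool) : Prop := GLConsistent (charFml B t)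

def boxTrue (B : Finset Fml) (t : Fml → Bool) : Finset Fml :=
  B.filter fun χ => χ.box ∈ B ∧ t χ.box = true

-- The strict growth of `boxTrue` bounds the length of chains by `|B|`.
structure CanonRel (B : Finset Fml) (t s : Fml → Bool) : Prop where
  of_mem_boxTrue : ∀ χ ∈ boxTrue B t, s χ = true
  boxTrue_ssubset : boxTrue B t ⊂ boxTrue B s

noncomputable def successorLits (B : Finset Fml) (t : Fml → Bool) (ψ : Fml) :
    List (Fml × Bool) :=
  ((boxTrue B t).toList ++ (boxTrue B t).toList.map Fml.box).map (·, true) ++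
    [(ψ.box, true), (ψ, false)]

noncomputable def canonicalModel (B : Finset Fml) : KripkeModel where
  W := {t // IsWorld B t}
  R t s := CanonRel B t.1 s.1
  V n t := t.1 (.prop n) = true

section CanonicalModel

variable {B : Finset Fml} {t s u : Fml → Bool} {χ ψ : Fml}

theorem mem_boxTrue : χ ∈ boxTrue B t ↔ χ ∈ B ∧ χ.box ∈ B ∧ t χ.box = true :=
  Finset.mem_filter

theorem charFml_imp_lit (hχ : χ ∈ B) : GLProv ((charFml B t).imp (Fml.lit (χ, t χ))) :=
  GLProv.normalSystem.conj_elem <|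
    List.mem_map.mpr ⟨_, List.mem_map.mpr ⟨χ, by simpa using hχ, rfl⟩, rfl⟩

theorem charFml_imp_box (hχ : χ ∈ boxTrue B t) : GLProv ((charFml B t).imp χ.box) := by
  obtain ⟨-, hχB, htχ⟩ := mem_boxTrue.mp hχ
  simpa [htχ, Fml.lit] using charFml_imp_lit (t := t) hχB

theorem IsWorld.exists_beval (ht : IsWorld B t) : ∃ f, ∀ χ ∈ B, beval f χ = t χ := by
  obtain ⟨f, hf⟩ := GLConsistent.exists_beval ht
  exact ⟨f, fun χ hχ => hf (χ, t χ) (List.mem_map.mpr ⟨χ, by simpa using hχ, rfl⟩)⟩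

theorem exists_isWorld {c : List (Fml × Bool)} (h : GLConsistent (Fml.litConj c)) :
    ∃ t, IsWorld B t ∧ ∀ p ∈ c, t p.1 = p.2 := by
  obtain ⟨d, hd, hdB⟩ := h.exists_append B.toList
  obtain ⟨f, hf⟩ := hd.exists_beval
  refine ⟨beval f, hd.of_taut_imp (taut_imp_of fun g hg => ?_), fun p hp => hf p (by simp [hp])⟩
  rw [charFml, beval_litConj]
  simp only [List.mem_map, Finset.mem_toList, forall_exists_index, and_imp]
  rintro _ χ hχ rfl
  obtain ⟨b, hb⟩ := hdB χ (by simpa using hχ)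
  rw [(beval_litConj g _).mp hg _ (List.mem_append_left c hb), hf _ (List.mem_append_left c hb)]

theorem card_boxTrue_le : (boxTrue B t).card ≤ B.card :=
  Finset.card_filter_le _ _

theorem CanonRel.card_boxTrue_lt (h : CanonRel B t s) : (boxTrue B t).card < (boxTrue B s).card :=
  Finset.card_lt_card h.boxTrue_ssubset

theorem CanonRel.trans (h₁ : CanonRel B t s) (h₂ : CanonRel B s u) : CanonRel B t u :=
  ⟨fun χ hχ => h₂.of_mem_boxTrue χ (h₁.boxTrue_ssubset.subset hχ),
    h₁.boxTrue_ssubset.trans h₂.boxTrue_ssubset⟩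

-- Löb's axiom is what allows a successor refuting `ψ` to satisfy `□ψ` as well.
theorem IsWorld.consistent_successorLits (ht : IsWorld B t) (hψ : ψ.box ∈ B)
    (hf : t ψ.box = false) : GLConsistent (Fml.litConj (successorLits B t ψ)) := by
  have hS := GLProv.normalSystem
  set Γ := (boxTrue B t).toList
  set A := Fml.conj (Γ ++ Γ.map Fml.box)
  suffices hcons : GLConsistent (A.and (ψ.box.and ψ.neg)) by
    rw [successorLits]
    refine hcons.of_taut_imp (taut_imp_of fun f hf => (beval_litConj f _).mpr ?_)
    simp only [beval, Bool.and_eq_true, Bool.not_eq_true'] at hf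
    obtain ⟨hA, hbox, hψf⟩ := hf
    rintro p hp
    rw [List.mem_append, List.mem_map, List.mem_cons, List.mem_singleton] at hp
    rcases hp with ⟨x, hx, rfl⟩ | rfl | rfl
    · exact (beval_conj f _).mp hA x hx
    · exact hbox
    · exact hψf
  intro hinc
  have h₁ : GLProv (A.imp (ψ.box.imp ψ)) :=
    hS.mp_taut (fun f => by simp only [Fml.imp, Fml.bot, beval]; grind) hinc
  have h₂ : GLProv (A.box.imp ψ.box) := hS.imp_trans (hS.box_mono h₁) (GLProv.lob ψ)
  have h₃ : GLProv ((charFml B t).imp A.box) := by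
    refine hS.imp_trans (hS.imp_conj fun x hx => ?_) (hS.conj_box _)
    simp only [List.map_append, List.map_map, List.mem_append, List.mem_map, Function.comp,
      Γ, Finset.mem_toList] at hx
    rcases hx with ⟨χ, hχ, rfl⟩ | ⟨χ, hχ, rfl⟩
    · exact charFml_imp_box hχ
    · exact hS.imp_trans (charFml_imp_box hχ) (GLProv.four χ)
  have h₄ : GLProv ((charFml B t).imp ψ.box.neg) := by
    simpa [hf, Fml.lit] using charFml_imp_lit (t := t) hψ
  exact ht (hS.mp_taut₂ (fun f => by simp only [Fml.imp, Fml.bot, beval]; grind)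
    (hS.imp_trans h₃ h₂) h₄)

theorem IsWorld.exists_canonRel (hB : SubformulaClosed B) (ht : IsWorld B t) (hψ : ψ.box ∈ B)
    (hf : t ψ.box = false) : ∃ s, IsWorld B s ∧ CanonRel B t s ∧ s ψ = false := by
  obtain ⟨s, hs, hsc⟩ := exists_isWorld (B := B) (ht.consistent_successorLits hψ hf)
  have hbox : ∀ χ ∈ boxTrue B t, s χ.box = true ∧ s χ = true := fun χ hχ =>
    ⟨hsc (χ.box, true) (by simp [successorLits, hχ]), hsc (χ, true) (by simp [successorLits, hχ])⟩
  refine ⟨s, hs, ⟨fun χ hχ => (hbox χ hχ).2, ?_⟩, hsc (ψ, false) (by simp [successorLits])⟩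
  rw [Finset.ssubset_iff_of_subset]
  · exact ⟨ψ, mem_boxTrue.mpr ⟨hB.box_mem hψ, hψ, hsc (ψ.box, true) (by simp [successorLits])⟩,
      fun h => by simp [mem_boxTrue, hf] at h⟩
  · intro χ hχ
    obtain ⟨hχB, hχbox, -⟩ := mem_boxTrue.mp hχ
    exact mem_boxTrue.mpr ⟨hχB, hχbox, (hbox χ hχ).1⟩

theorem forces_canonicalModel_iff (hB : SubformulaClosed B) (hψ : ψ ∈ B)
    (w : (canonicalModel B).W) : (canonicalModel B).Forces w ψ ↔ w.1 ψ = true := by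
  induction ψ generalizing w with
  | prop n => rfl
  | top =>
    obtain ⟨f, hf⟩ := w.2.exists_beval
    simp [KripkeModel.Forces, ← hf _ hψ, beval]
  | and a b iha ihb =>
    obtain ⟨ha, hb⟩ := hB.and_mem hψ
    obtain ⟨f, hf⟩ := w.2.exists_beval
    rw [KripkeModel.Forces, iha ha, ihb hb, ← hf _ hψ, ← hf _ ha, ← hf _ hb]
    simp [beval]
  | neg a ih =>
    have ha := hB.neg_mem hψ
    obtain ⟨f, hf⟩ := w.2.exists_beval
    rw [KripkeModel.Forces, ih ha, ← hf _ hψ, ← hf _ ha]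
    simp [beval]
  | box a ih =>
    have ha := hB.box_mem hψ
    constructor
    · intro hforces
      by_contra hne
      obtain ⟨s, hs, hws, hsa⟩ := w.2.exists_canonRel hB hψ (by simpa using hne)
      simpa [hsa] using (ih ha ⟨s, hs⟩).mp (hforces ⟨s, hs⟩ hws)
    · intro htrue s hws
      exact (ih ha s).mpr (hws.of_mem_boxTrue a (mem_boxTrue.mpr ⟨ha, hψ, htrue⟩))

theorem wellFounded_flip_canonicalModel : WellFounded (flip (canonicalModel B).R) :=
  wellFounded_flip_of_rank (fun w : (canonicalModel B).W => (boxTrue B w.1).card) B.card (fun h => h.card_boxTrue_lt)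
    fun _ => card_boxTrue_le

theorem canonicalModel_trans {u v w : (canonicalModel B).W} (huv : (canonicalModel B).R u v)
    (hvw : (canonicalModel B).R v w) : (canonicalModel B).R u w :=
  CanonRel.trans huv hvw

theorem not_forces_dian_top_canonicalModel (w : (canonicalModel B).W) :
    ¬ (canonicalModel B).Forces w (Fml.dian (B.card + 1) Fml.top) := fun h => by
  have := (canonicalModel B).add_le_of_forces_dian_top (fun w => (boxTrue B w.1).card)
    (fun h => CanonRel.card_boxTrue_lt h) (fun _ => card_boxTrue_le) _ w h
  omega

end CanonicalModel

theorem GLProv.imp_bot_of_forall_imp_dian_top {φ : Fml}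
    (h : ∀ n, GLProv (φ.imp (Fml.dian n Fml.top))) : GLProv (φ.imp Fml.bot) := by
  by_contra hφ
  have hcons : GLConsistent (Fml.litConj [(φ, true)]) := GLConsistent.of_taut_imp hφ fun f => by
    simp only [Fml.litConj, List.map, Fml.lit, Fml.conj, Fml.imp, beval]
    grind
  obtain ⟨t, ht, htφ⟩ := exists_isWorld (B := φ.subformulas) hcons
  have hφt : (canonicalModel φ.subformulas).Forces ⟨t, ht⟩ φ :=
    (forces_canonicalModel_iff (Fml.subformulaClosed_subformulas φ) (Fml.mem_subformulas_self φ)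
      _).mpr (htφ _ (List.mem_singleton_self _))
  exact not_forces_dian_top_canonicalModel _ <| KripkeModel.forces_imp.mp
    (GLProv.forces (h _) _ canonicalModel_trans wellFounded_flip_canonicalModel _) hφt

theorem GLProv.toNGL {φ : Fml} (h : GLProv φ) : NGL φ := by
  induction h with
  | taut h => exact NGL.taut h
  | axK => exact NGL.axK
  | axLob => exact NGL.lob (Fml.prop 0)
  | mp _ _ ih₁ ih₂ => exact NGL.mp ih₁ ih₂
  | usub σ _ ih => exact NGL.usub σ ih
  | nec _ ih => exact NGL.nec ih

theorem NGL.toGLProv {φ : Fml} (h : NGL φ) : GLProv φ := by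
  induction h with
  | taut h => exact GLProv.taut h
  | axK => exact GLProv.axK
  | ax4 => exact GLProv.four (Fml.prop 0)
  | mp _ _ ih₁ ih₂ => exact GLProv.mp ih₁ ih₂
  | usub σ _ ih => exact GLProv.usub σ ih
  | nec _ ih => exact GLProv.nec ih
  | nc _ ih => exact GLProv.imp_bot_of_forall_imp_dian_top ih

theorem stmt6 (φ : Fml) : GLProv φ ↔ NGL φ :=
  ⟨GLProv.toNGL, NGL.toGLProv⟩
end

section
/- Let A be a modal algebra such that □x ≤ □□x holds for every x ∈ A. Then for every x ∈ A and every n ∈ ω, □(□x ⇨ x) ⊓ ¬□x ≤ ◇ⁿ⊤, where a ⇨ b denotes the Boolean implication ¬a ⊔ b. -/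
/-
Put `b = □(□x ⇨ x)` and `L = b \ □x`, so that `¬L = b ⇨ □x`. Transitivity gives `b ≤ □b`, hence
by axiom K `b ⊓ □¬L ≤ □□x`, and K once more with `b` gives `b ⊓ □¬L ≤ □x`. Thus `L ⊓ □¬L = ⊥`,
that is `L ≤ ◇L`, and since `◇` is monotone, `L ≤ ◇ⁿ⊤` for every `n`.
-/

theorem diaA_mono {A : Type} [BooleanAlgebra A] {box : A → A} (hbox : Monotone box) :
    Monotone (diaA box) :=
  fun _ _ h => compl_le_compl (hbox (compl_le_compl h))

theorem le_dianA_of_le_diaA {A : Type} [BooleanAlgebra A] {box : A → A} (hbox : Monotone box)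
    {a : A} (ha : a ≤ diaA box a) : ∀ n, a ≤ dianA box n
  | 0 => le_top
  | n + 1 => ha.trans (diaA_mono hbox (le_dianA_of_le_diaA hbox ha n))

theorem box_himp_inf_le {A : Type*} [GeneralizedHeytingAlgebra A] {box : A → A}
    (hbox_inf : ∀ x y : A, box (x ⊓ y) = box x ⊓ box y) (a b : A) :
    box (a ⇨ b) ⊓ box a ≤ box b := by
  rw [← hbox_inf]
  exact Monotone.of_map_inf hbox_inf himp_inf_le

theorem le_diaA_box_himp_sdiff {A : Type} [BooleanAlgebra A] {box : A → A}
    (hbox_inf : ∀ x y : A, box (x ⊓ y) = box x ⊓ box y)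
    (htrans : ∀ x : A, box x ≤ box (box x)) (x : A) :
    box (box x ⇨ x) \ box x ≤ diaA box (box (box x ⇨ x) \ box x) := by
  set b := box (box x ⇨ x)
  rw [diaA, compl_sdiff, le_compl_iff_disjoint_right, disjoint_iff, sdiff_inf_right_comm,
    sdiff_eq_bot_iff]
  have hbox_box : b ⊓ box (b ⇨ box x) ≤ box (box x) :=
    calc b ⊓ box (b ⇨ box x)
        ≤ box (b ⇨ box x) ⊓ box b := le_inf inf_le_right (inf_le_left.trans (htrans _))
      _ ≤ box (box x) := box_himp_inf_le hbox_inf _ _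
  exact (le_inf inf_le_left hbox_box).trans (box_himp_inf_le hbox_inf _ _)

theorem stmt7_general {A : Type} [BooleanAlgebra A] (box : A → A)
    (hbox_inf : ∀ x y : A, box (x ⊓ y) = box x ⊓ box y)
    (htrans : ∀ x : A, box x ≤ box (box x)) (x : A) (n : ℕ) :
    box (box x ⇨ x) ⊓ (box x)ᶜ ≤ dianA box n := by
  rw [← sdiff_eq]
  exact le_dianA_of_le_diaA (Monotone.of_map_inf hbox_inf)
    (le_diaA_box_himp_sdiff hbox_inf htrans x) n

theorem stmt7 {A : Type} [BooleanAlgebra A] (box : A → A)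
    (hbox_top : box ⊤ = ⊤) (hbox_inf : ∀ x y : A, box (x ⊓ y) = box x ⊓ box y)
    (htrans : ∀ x : A, box x ≤ box (box x)) (x : A) (n : ℕ) :
    box (box x ⇨ x) ⊓ (box x)ᶜ ≤ dianA box n :=
  stmt7_general box hbox_inf htrans x n
end

section
/- Let F be the Kripke frame (ω+1, >). Then the non-compactness rule is true at the modal algebra Alg(F): for every modal formula φ, if for every n ∈ ω and every valuation v : Prop → P(ω+1) the truth set of φ⊃◇ⁿ⊤ in the model (ω+1, >, v) is all of ω+1, then for every valuation v the truth set of φ⊃⊥ in (ω+1, >, v) is all of ω+1. -/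
/-- The accessibility relation of the frame `(ω+1, >)`. -/
def Rgt (w w' : ℕ∞) : Prop := w' < w

/-!
If `φ ⊃ ◇ⁿ⊤` is valid on `(ω+1, >)` for every `n`, then `φ` can only hold at the world `ω`, since
`◇ⁿ⊤` fails at every world `m < n`. But a model in which `φ` holds at `ω` can be collapsed onto a
finite world: `φ` has finitely many subformulas, so there is a common bound `M` such that each
subformula failing at some finite world already fails below `M`. Re-valuing every world `≥ M` like
`ω` then makes `M` indistinguishable from `ω` for the subformulas of `φ`, so `φ` holds at `M`.
-/

namespace Fml

def subformulas_s11 : Fml → List Fml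
  | .prop n => [.prop n]
  | .top => [.top]
  | .and a b => .and a b :: (a.subformulas_s11 ++ b.subformulas_s11)
  | .neg a => .neg a :: a.subformulas_s11
  | .box a => .box a :: a.subformulas_s11

theorem mem_subformulas_self_s11 (ψ : Fml) : ψ ∈ ψ.subformulas_s11 := by
  cases ψ <;> simp [subformulas_s11]

end Fml

theorem Finset.exists_common_bound_of_exists {ι : Type*} (s : Finset ι) (P : ι → ℕ → Prop) :
    ∃ M, ∀ i ∈ s, (∃ m, P i m) → ∃ k < M, P i k := by
  choose! f hf using fun i (h : ∃ m, P i m) => h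
  exact ⟨s.sup f + 1, fun i hi h => ⟨f i, Nat.lt_succ_of_le (Finset.le_sup hi), hf i h⟩⟩

theorem truth_congr_of_reflTransGen {W : Type} {R : W → W → Prop} {v v' : ℕ → Set W} (ψ : Fml)
    {w : W} (hv : ∀ p x, Relation.ReflTransGen R w x → (x ∈ v p ↔ x ∈ v' p)) :
    Truth R v ψ w ↔ Truth R v' ψ w := by
  induction ψ generalizing w with
  | prop n => exact hv n w .refl
  | top => exact Iff.rfl
  | and a b iha ihb => exact and_congr (iha hv) (ihb hv)
  | neg a iha => exact not_congr (iha hv)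
  | box a iha =>
    exact forall_congr' fun w' => imp_congr_right fun hww' =>
      iha fun p x hw'x => hv p x (.head hww' hw'x)

theorem le_of_reflTransGen_rgt {w x : ℕ∞} (h : Relation.ReflTransGen Rgt w x) : x ≤ w := by
  induction h with
  | refl => exact le_rfl
  | tail _ hyz ih => exact hyz.le.trans ih

theorem natCast_le_of_truth_dian_top {v : ℕ → Set ℕ∞} (n : ℕ) {w : ℕ∞}
    (hw : Truth Rgt v (Fml.dian n .top) w) : (n : ℕ∞) ≤ w := by
  induction n generalizing w with
  | zero => exact zero_le
  | succ n ih =>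
    obtain ⟨w', hww', hw'⟩ : ∃ w', w' < w ∧ Truth Rgt v (Fml.dian n .top) w' := by
      simpa [Fml.dian, Fml.dia, Truth, Rgt] using hw
    exact_mod_cast Order.add_one_le_of_lt ((ih hw').trans_lt hww')

def collapseAbove (v : ℕ → Set ℕ∞) (M : ℕ) (p : ℕ) : Set ℕ∞ :=
  {x | if x < M then x ∈ v p else ⊤ ∈ v p}

theorem truth_collapseAbove_iff {v : ℕ → Set ℕ∞} {M : ℕ} {k : ℕ} (hk : k < M) (ψ : Fml) :
    Truth Rgt (collapseAbove v M) ψ k ↔ Truth Rgt v ψ k :=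
  truth_congr_of_reflTransGen ψ fun p x hkx => by
    have hxM : x < M := (le_of_reflTransGen_rgt hkx).trans_lt (by exact_mod_cast hk)
    simp [collapseAbove, hxM]

theorem truth_collapseAbove_natCast_iff_top {v : ℕ → Set ℕ∞} {M : ℕ} (ψ : Fml)
    (hM : ∀ a ∈ ψ.subformulas_s11, (∃ m : ℕ, ¬ Truth Rgt v a m) → ∃ k < M, ¬ Truth Rgt v a k) :
    Truth Rgt (collapseAbove v M) ψ M ↔ Truth Rgt v ψ ⊤ := by
  induction ψ with
  | prop n => simp [Truth, collapseAbove]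
  | top => exact Iff.rfl
  | and a b iha ihb =>
    exact and_congr (iha fun c hc => hM c (by simp [Fml.subformulas_s11, hc]))
      (ihb fun c hc => hM c (by simp [Fml.subformulas_s11, hc]))
  | neg a iha => exact not_congr (iha fun c hc => hM c (by simp [Fml.subformulas_s11, hc]))
  | box a _ =>
    have ha := hM a (by simp [Fml.subformulas_s11, Fml.mem_subformulas_self_s11])
    calc (∀ x, x < (M : ℕ∞) → Truth Rgt (collapseAbove v M) a x)
        ↔ ∀ k : ℕ, k < M → Truth Rgt v a k :=
          WithTop.forall_lt_coe.trans (forall₂_congr fun k hk => truth_collapseAbove_iff hk a)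
      _ ↔ ∀ m : ℕ, Truth Rgt v a m := by
          refine ⟨fun hbelow m => by_contra fun hm => ?_, fun hall k _ => hall k⟩
          obtain ⟨k, hk, hak⟩ := ha ⟨m, hm⟩
          exact hak (hbelow k hk)
      _ ↔ ∀ x, x < ⊤ → Truth Rgt v a x := by
          simp only [lt_top_iff_ne_top, ne_eq, ENat.forall_ne_top]

theorem exists_truth_natCast_of_truth_top {φ : Fml} {v : ℕ → Set ℕ∞} (hφ : Truth Rgt v φ ⊤) :
    ∃ (v' : ℕ → Set ℕ∞) (M : ℕ), Truth Rgt v' φ M := by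
  classical
  obtain ⟨M, hM⟩ :=
    Finset.exists_common_bound_of_exists φ.subformulas_s11.toFinset fun a (m : ℕ) => ¬ Truth Rgt v a m
  exact ⟨collapseAbove v M, M,
    (truth_collapseAbove_natCast_iff_top φ fun a ha => hM a (List.mem_toFinset.2 ha)).2 hφ⟩

theorem stmt11 (φ : Fml)
    (h : ∀ (n : ℕ) (v : ℕ → Set ℕ∞) (w : ℕ∞),
      Truth Rgt v (Fml.imp φ (Fml.dian n Fml.top)) w) :
    ∀ (v : ℕ → Set ℕ∞) (w : ℕ∞), Truth Rgt v (Fml.imp φ Fml.bot) w := by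
  have eq_top_of_truth (v : ℕ → Set ℕ∞) (w : ℕ∞) (hφw : Truth Rgt v φ w) : w = ⊤ := by
    by_contra hw
    obtain ⟨m, rfl⟩ := WithTop.ne_top_iff_exists.1 hw
    have hdia : Truth Rgt v (Fml.dian (m + 1) .top) m :=
      of_not_not fun hnot => h (m + 1) v m ⟨hφw, hnot⟩
    exact (natCast_le_of_truth_dian_top (m + 1) hdia).not_gt (by exact_mod_cast m.lt_succ_self)
  rintro v w ⟨hφw, -⟩
  obtain rfl := eq_top_of_truth v w hφw
  obtain ⟨v', M, hφM⟩ := exists_truth_natCast_of_truth_top hφw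
  exact ENat.natCast_ne_top M (eq_top_of_truth v' M hφM)
end

section
/- (Rasiowa–Sikorski.) Let A be a Boolean algebra and Q a countable collection of subsets of A such that every X ∈ Q has a greatest lower bound ⋀X in A. For any a₁, a₂ ∈ A with a₁ ≰ a₂, there exists a prime filter F of A such that a₁ ∈ F, a₂ ∉ F, and for every X ∈ Q, if X ⊆ F then ⋀X ∈ F. -/
open Order

theorem IsPrimeFilter.notMem_of_compl_mem {A : Type} [BooleanAlgebra A] {F : Set A}
    (hF : IsPrimeFilter F) {x : A} (hx : xᶜ ∈ F) : x ∉ F := fun hx' =>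
  hF.bot_not_mem (inf_compl_eq_bot (a := x) ▸ hF.inf_mem hx' hx)

theorem Order.Ideal.IsPrime.isPrimeFilter_compl {A : Type} [BooleanAlgebra A] {J : Ideal A}
    (hJ : J.IsPrime) : IsPrimeFilter (J : Set A)ᶜ where
  top_mem := Ideal.isProper_iff_top_notMem.1 hJ.toIsProper
  bot_not_mem := not_not.2 J.bot_mem
  inf_mem _ hx _ hy hxy := (hJ.mem_or_mem hxy).elim hx hy
  mem_of_le _ hx _ hxy hy := hx (J.lower hxy hy)
  prime x y hxy := by
    by_contra! h
    exact hxy (Ideal.sup_mem (not_not.1 h.1) (not_not.1 h.2))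

theorem Order.exists_pfilter_meets_of_dense {P : Type*} [PartialOrder P] [OrderBot P]
    {ι : Type*} [Countable ι] (D : ι → Set P)
    (hD : ∀ i c, c ≠ ⊥ → ∃ d ≤ c, d ≠ ⊥ ∧ d ∈ D i) {p : P} (hp : p ≠ ⊥) :
    ∃ F : PFilter P, p ∈ F ∧ ⊥ ∉ F ∧ ∀ i, ∃ d ∈ D i, d ∈ F := by
  let _ := Encodable.ofCountable ι
  -- Mathlib's Rasiowa–Sikorski ideal, taken in the nonzero elements ordered downwards.
  let 𝒟 : ι → Cofinal {c : P // c ≠ ⊥}ᵒᵈ := fun i =>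
    ⟨{c | (OrderDual.ofDual c).1 ∈ D i}, fun c => by
      obtain ⟨d, hdc, hd, hdD⟩ := hD i _ (OrderDual.ofDual c).2
      exact ⟨OrderDual.toDual ⟨d, hd⟩, hdD, hdc⟩⟩
  let G := idealOfCofinals (OrderDual.toDual ⟨p, hp⟩) 𝒟
  have hF : IsPFilter {a : P | ∃ c ∈ G, (OrderDual.ofDual c).1 ≤ a} := by
    refine .of_def ⟨p, _, mem_idealOfCofinals _ 𝒟, le_rfl⟩ ?_ ?_
    · rintro a ⟨c, hc, hca⟩ b ⟨d, hd, hdb⟩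
      obtain ⟨e, he, hce, hde⟩ := G.directed c hc d hd
      exact ⟨_, ⟨e, he, le_rfl⟩, le_trans (α := P) hce hca, le_trans (α := P) hde hdb⟩
    · rintro a b hab ⟨c, hc, hca⟩
      exact ⟨c, hc, hca.trans hab⟩
  refine ⟨hF.toPFilter, ⟨_, mem_idealOfCofinals _ 𝒟, le_rfl⟩, ?_, fun i => ?_⟩
  · rintro ⟨c, -, hc⟩
    exact (OrderDual.ofDual c).2 (le_bot_iff.1 hc)
  · obtain ⟨c, hc𝒟, hcG⟩ := cofinal_meets_idealOfCofinals _ 𝒟 i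
    exact ⟨_, hc𝒟, c, hcG, le_rfl⟩

def decidingSet {A : Type*} [BooleanAlgebra A] (X : Set A) : Set A :=
  {c | (∀ x ∈ X, c ≤ x) ∨ ∃ x ∈ X, c ≤ xᶜ}

theorem exists_le_ne_bot_mem_decidingSet {A : Type*} [BooleanAlgebra A] (X : Set A) {c : A}
    (hc : c ≠ ⊥) : ∃ d ≤ c, d ≠ ⊥ ∧ d ∈ decidingSet X := by
  by_cases hcX : ∀ x ∈ X, c ≤ x
  · exact ⟨c, le_rfl, hc, .inl hcX⟩
  obtain ⟨x, hx, hcx⟩ := not_forall₂.1 hcX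
  exact ⟨c \ x, sdiff_le, mt sdiff_eq_bot_iff.1 hcx,
    .inr ⟨x, hx, disjoint_sdiff_self_left.le_compl_right⟩⟩

theorem stmt19 {A : Type} [BooleanAlgebra A] (Q : Set (Set A)) (hQ : Q.Countable)
    (inf : Set A → A) (hinf : ∀ X ∈ Q, IsGLB X (inf X))
    (a₁ a₂ : A) (h : ¬ a₁ ≤ a₂) :
    ∃ F : Set A, IsPrimeFilter F ∧ a₁ ∈ F ∧ a₂ ∉ F ∧
      ∀ X ∈ Q, X ⊆ F → inf X ∈ F := by
  have := hQ.to_subtype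
  obtain ⟨F, hpF, hbot, hF⟩ := exists_pfilter_meets_of_dense (fun X : Q => decidingSet X)
    (fun X _ => exists_le_ne_bot_mem_decidingSet (X : Set A)) (mt sdiff_eq_bot_iff.1 h)
  have hdisj : Disjoint (F : Set A) (Ideal.principal (⊥ : A)) :=
    Set.disjoint_left.2 fun x hxF hx => hbot (le_bot_iff.1 hx ▸ hxF)
  obtain ⟨J, hJ, -, hFJ⟩ := DistribLattice.prime_ideal_of_disjoint_filter_ideal hdisj
  have hFG {x : A} (hx : x ∈ F) : x ∈ (J : Set A)ᶜ := Set.disjoint_left.1 hFJ hx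
  have hG := hJ.isPrimeFilter_compl
  refine ⟨_, hG, hFG (F.mem_of_le sdiff_le hpF),
    hG.notMem_of_compl_mem (hFG (F.mem_of_le disjoint_sdiff_self_left.le_compl_right hpF)),
    fun X hX hXG => ?_⟩
  obtain ⟨d, hd | ⟨x, hx, hdx⟩, hdF⟩ := hF ⟨X, hX⟩
  · exact hFG (F.mem_of_le ((hinf X hX).2 hd) hdF)
  · exact absurd (hXG hx) (hG.notMem_of_compl_mem (hFG (F.mem_of_le hdx hdF)))
end
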